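/- Let V₁, V₂, V₃ be finite-dimensional vector spaces and let (f, g), (f', g') ∈ Hom(V₁,V₂) × Hom(V₃,V₂). Then there exist invertible linear maps A ∈ GL(V₁), B ∈ GL(V₂), C ∈ GL(V₃) with f' = B ∘ f ∘ A⁻¹ and g' = B ∘ g ∘ C⁻¹ if and only if rank f = rank f', rank g = rank g', and dim(im f + im g) = dim(im f' + im g'). -/

import Mathlib

/-!
`B` carries `range f`, `range g` onto `range f'`, `range g'`, so the three dimensions are
invariants. Conversely, two pairs of subspaces `(U, W)` and `(U', W')` of `V` with equal
dimensions of `U`, `W` and `U ⊔ W` (hence of `U ⊓ W`) are conjugate under `GL(V)`: identify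
`U ⊓ W` with `U' ⊓ W'`, extend this to `U ≃ U'`, pick a complement `Q` of `U ⊓ W` in `W`, and
extend the resulting embedding of `U × Q` to all of `V`. Once `B` matches the images, `B ∘ f`
and `f'` have the same range, and two maps with the same range differ by an automorphism of the
domain, because a surjection `p : V → R` identifies `V` with `R × ker p`.
-/

open Module LinearMap Submodule

section

variable {k V V' S R : Type*} [Field k] [AddCommGroup V] [Module k V]
  [AddCommGroup V'] [Module k V'] [AddCommGroup S] [Module k S] [AddCommGroup R] [Module k R]

theorem IsModularLattice.exists_disjoint_and_inf_sup_eq {α : Type*} [Lattice α] [BoundedOrder α]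
    [IsModularLattice α] [ComplementedLattice α] (a b : α) :
    ∃ c, Disjoint a c ∧ a ⊓ b ⊔ c = b := by
  obtain ⟨c, hc, hsup⟩ := exists_disjoint_and_sup_eq (inf_le_right : a ⊓ b ≤ b)
  have hcb : c ≤ b := hsup ▸ le_sup_right
  exact ⟨c, inf_eq_right.2 hcb ▸ disjoint_assoc.1 hc, hsup⟩

theorem LinearEquiv.map_eq_of_forall_mem [FiniteDimensional k V'] (e : V ≃ₗ[k] V')
    {p : Submodule k V} {p' : Submodule k V'} (hmem : ∀ x ∈ p, e x ∈ p')
    (h : finrank k p = finrank k p') : p.map (e : V →ₗ[k] V') = p' :=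
  eq_of_le_of_finrank_eq (map_le_iff_le_comap.2 hmem) ((e.finrank_map_eq p).trans h)

theorem Submodule.injective_coprod_subtype_of_disjoint {U Q : Submodule k V}
    (h : Disjoint U Q) : Function.Injective (U.subtype.coprod Q.subtype) := by
  rw [← ker_eq_bot, ker_coprod_of_disjoint_range _ _ (by rwa [range_subtype, range_subtype]),
    ker_subtype, ker_subtype, prod_bot]

theorem exists_linearEquiv_comp_eq_of_injective [FiniteDimensional k V] [FiniteDimensional k V']
    {i : S →ₗ[k] V} {i' : S →ₗ[k] V'} (hi : Function.Injective i) (hi' : Function.Injective i')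
    (h : finrank k V = finrank k V') : ∃ e : V ≃ₗ[k] V', e.toLinearMap ∘ₗ i = i' := by
  obtain ⟨C, hC⟩ := (range i).exists_isCompl
  obtain ⟨C', hC'⟩ := (range i').exists_isCompl
  have hCC' : finrank k C = finrank k C' := by
    have := finrank_add_eq_of_isCompl hC
    have := finrank_add_eq_of_isCompl hC'
    have := finrank_range_of_inj hi
    have := finrank_range_of_inj hi'
    omega
  let Ψ : (S × C) ≃ₗ[k] V :=
    ((LinearEquiv.ofInjective i hi).prodCongr (LinearEquiv.refl k C)).trans
      (prodEquivOfIsCompl _ _ hC)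
  let Ψ' : (S × C') ≃ₗ[k] V' :=
    ((LinearEquiv.ofInjective i' hi').prodCongr (LinearEquiv.refl k C')).trans
      (prodEquivOfIsCompl _ _ hC')
  refine ⟨Ψ.symm.trans
    (((LinearEquiv.refl k S).prodCongr (LinearEquiv.ofFinrankEq _ _ hCC')).trans Ψ'), ?_⟩
  ext s
  have hΨ : Ψ (s, 0) = i s := by simp [Ψ]
  simp [← hΨ, Ψ']

theorem exists_linearEquiv_prod_ker_of_surjective {p : V →ₗ[k] R} (hp : range p = ⊤) :
    ∃ Φ : V ≃ₗ[k] R × ker p, LinearMap.fst k R (ker p) ∘ₗ Φ.toLinearMap = p := by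
  obtain ⟨C, hC⟩ := (ker p).exists_isCompl
  exact ⟨equivProdOfSurjectiveOfIsCompl p (projectionOnto _ _ hC) hp (range_projectionOnto hC)
    (by rwa [ker_projectionOnto]), rfl⟩

theorem exists_linearEquiv_comp_eq_of_surjective [FiniteDimensional k V] {p q : V →ₗ[k] R}
    (hp : range p = ⊤) (hq : range q = ⊤) : ∃ A : V ≃ₗ[k] V, p ∘ₗ A.toLinearMap = q := by
  obtain ⟨Φ, hΦ⟩ := exists_linearEquiv_prod_ker_of_surjective hp
  obtain ⟨Φ', hΦ'⟩ := exists_linearEquiv_prod_ker_of_surjective hq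
  have hker : finrank k (ker q) = finrank k (ker p) := by
    have := finrank_range_add_finrank_ker p
    have := finrank_range_add_finrank_ker q
    rw [hp, hq] at *
    omega
  refine ⟨Φ'.trans (((LinearEquiv.refl k R).prodCongr
    (LinearEquiv.ofFinrankEq _ _ hker)).trans Φ.symm), ?_⟩
  ext x
  have hpΦ := LinearMap.congr_fun hΦ
  have hqΦ' := LinearMap.congr_fun hΦ' x
  simp only [coe_comp, LinearEquiv.coe_coe, Function.comp_apply, fst_apply] at hpΦ hqΦ'
  simp [← hpΦ, ← hqΦ']

theorem exists_linearEquiv_comp_eq_of_range_eq [FiniteDimensional k V] {f h : V →ₗ[k] V'}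
    (hfh : range f = range h) : ∃ A : V ≃ₗ[k] V, f ∘ₗ A.toLinearMap = h := by
  have hh : range (h.codRestrict (range f) (fun x => hfh ▸ mem_range_self h x)) = ⊤ := by
    rw [range_codRestrict, hfh, comap_subtype_self]
  obtain ⟨A, hA⟩ := exists_linearEquiv_comp_eq_of_surjective (range_rangeRestrict f) hh
  exact ⟨A, congrArg (range f).subtype.comp hA⟩

theorem Submodule.finrank_inf_add_finrank_eq_of_disjoint [FiniteDimensional k V]
    {U W Q : Submodule k V} (hUQ : Disjoint U Q) (hQW : U ⊓ W ⊔ Q = W) :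
    finrank k ↥(U ⊓ W) + finrank k Q = finrank k W := by
  have h := finrank_sup_add_finrank_inf_eq (U ⊓ W) Q
  rwa [hQW, (hUQ.mono_left inf_le_left).eq_bot, finrank_bot, add_zero, eq_comm] at h

theorem Submodule.exists_linearEquiv_map_eq_map_eq [FiniteDimensional k V]
    {U W U' W' : Submodule k V} (hU : finrank k U = finrank k U')
    (hW : finrank k W = finrank k W') (hUW : finrank k ↥(U ⊔ W) = finrank k ↥(U' ⊔ W')) :
    ∃ B : V ≃ₗ[k] V, U.map (B : V →ₗ[k] V) = U' ∧ W.map (B : V →ₗ[k] V) = W' := by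
  have hI : finrank k ↥(U ⊓ W) = finrank k ↥(U' ⊓ W') := by
    have := finrank_sup_add_finrank_inf_eq U W
    have := finrank_sup_add_finrank_inf_eq U' W'
    omega
  let φ := LinearEquiv.ofFinrankEq _ _ hI
  obtain ⟨α, hα⟩ := exists_linearEquiv_comp_eq_of_injective
    (i' := inclusion (inf_le_left : U' ⊓ W' ≤ U') ∘ₗ φ.toLinearMap)
    (inclusion_injective (inf_le_left : U ⊓ W ≤ U))
    ((inclusion_injective (inf_le_left : U' ⊓ W' ≤ U')).comp φ.injective) hU
  obtain ⟨Q, hUQ, hQW⟩ := IsModularLattice.exists_disjoint_and_inf_sup_eq U W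
  obtain ⟨Q', hUQ', hQW'⟩ := IsModularLattice.exists_disjoint_and_inf_sup_eq U' W'
  have hQ : finrank k Q = finrank k Q' := by
    have := finrank_inf_add_finrank_eq_of_disjoint hUQ hQW
    have := finrank_inf_add_finrank_eq_of_disjoint hUQ' hQW'
    omega
  let ψ := LinearEquiv.ofFinrankEq _ _ hQ
  obtain ⟨B, hB⟩ := exists_linearEquiv_comp_eq_of_injective
    (i' := U'.subtype.coprod Q'.subtype ∘ₗ (α.prodCongr ψ).toLinearMap)
    (injective_coprod_subtype_of_disjoint hUQ)
    ((injective_coprod_subtype_of_disjoint hUQ').comp (α.prodCongr ψ).injective) rfl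
  have hBU : ∀ u : U, B u = α u := fun u => by simpa using LinearMap.congr_fun hB (u, 0)
  have hBQ : ∀ q : Q, B q = ψ q := fun q => by simpa using LinearMap.congr_fun hB (0, q)
  have hBI : ∀ x : ↥(U ⊓ W), B x = φ x := fun x => by
    rw [← coe_inclusion (inf_le_left : U ⊓ W ≤ U), hBU]
    exact congrArg Subtype.val (LinearMap.congr_fun hα x)
  refine ⟨B, B.map_eq_of_forall_mem (fun x hx => ?_) hU,
    B.map_eq_of_forall_mem (fun x hx => ?_) hW⟩
  · simpa using hBU ⟨x, hx⟩ ▸ (α ⟨x, hx⟩).2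
  · rw [← hQW] at hx
    obtain ⟨y, hy, z, hz, rfl⟩ := mem_sup.1 hx
    rw [map_add, hBI ⟨y, hy⟩, hBQ ⟨z, hz⟩]
    exact add_mem (φ _).2.2 ((hQW' ▸ le_sup_right : Q' ≤ W') (ψ _).2)

end

theorem a3_orbit_classification (k : Type*) [Field k]
    (V₁ V₂ V₃ : Type*) [AddCommGroup V₁] [Module k V₁] [AddCommGroup V₂] [Module k V₂]
    [AddCommGroup V₃] [Module k V₃]
    [FiniteDimensional k V₁] [FiniteDimensional k V₂] [FiniteDimensional k V₃]
    (f f' : V₁ →ₗ[k] V₂) (g g' : V₃ →ₗ[k] V₂) :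
    (∃ (A : V₁ ≃ₗ[k] V₁) (B : V₂ ≃ₗ[k] V₂) (C : V₃ ≃ₗ[k] V₃),
        f' = B.toLinearMap ∘ₗ f ∘ₗ A.symm.toLinearMap ∧
        g' = B.toLinearMap ∘ₗ g ∘ₗ C.symm.toLinearMap) ↔
      (finrank k (LinearMap.range f) = finrank k (LinearMap.range f') ∧
       finrank k (LinearMap.range g) = finrank k (LinearMap.range g') ∧
       finrank k ↥(LinearMap.range f ⊔ LinearMap.range g) =
         finrank k ↥(LinearMap.range f' ⊔ LinearMap.range g')) := by
  constructor
  · rintro ⟨A, B, C, rfl, rfl⟩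
    rw [range_comp _ B.toLinearMap, range_comp _ B.toLinearMap, LinearEquiv.range_comp,
      LinearEquiv.range_comp, ← Submodule.map_sup]
    simp only [LinearEquiv.finrank_map_eq, and_self]
  · rintro ⟨hf, hg, hfg⟩
    obtain ⟨B, hBf, hBg⟩ := exists_linearEquiv_map_eq_map_eq hf hg hfg
    obtain ⟨A, hA⟩ := exists_linearEquiv_comp_eq_of_range_eq (f := B.toLinearMap ∘ₗ f)
      (h := f') (by rw [range_comp, hBf])
    obtain ⟨C, hC⟩ := exists_linearEquiv_comp_eq_of_range_eq (f := B.toLinearMap ∘ₗ g)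
      (h := g') (by rw [range_comp, hBg])
    exact ⟨A.symm, B, C.symm, by simp [← hA, comp_assoc], by simp [← hC, comp_assoc]⟩
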